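/- arXiv:1410.7912 — 2 statements merged into one kernel-verified Lean document; each statement's English description precedes it below -/
import Mathlib

section
/- Let X = Σ_{i=1}^n X_i where X₁,…,X_n are {0,1}-valued random variables satisfying Pr[∀ i ∈ I : X_i = 1] ≤ ∏_{i∈I} Pr[X_i=1] for all I ⊆ {1,…,n}, and suppose E[X] ≤ μ. Then for any δ > 0, Pr[X ≥ (1+δ)μ] ≤ (e^δ/(1+δ)^{1+δ})^μ (the Chernoff upper-tail bound holds under this negative correlation condition). -/
open MeasureTheory Finset

/-!
Write `N` for the number of events `A i` that occur, with `p i = P (A i)`. Since each indicator is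
`0` or `1`, `exp (t * N) = ∏ i, (1 + c * 1_{A i})` with `c = exp t - 1 ≥ 0`; expanding the product
gives a sum over subsets `I` with nonnegative coefficients `c ^ #I` of the indicators of
`⋂ i ∈ I, A i`. Negative correlation therefore gives `E[exp (t * N)] ≤ ∏ i, (1 + c * p i)
≤ exp (c * ∑ i, p i)`, exactly the bound for independent events, and Markov's inequality at
`t = log (1 + δ)` yields the Chernoff bound.
-/

open ProbabilityTheory Real

section EventCount

lemma exp_neg_log_mul_mul_exp_eq_rpow {δ : ℝ} (h1δ : 0 < 1 + δ) (μ : ℝ) :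
    exp (-log (1 + δ) * ((1 + δ) * μ)) * exp (δ * μ)
      = (exp δ / (1 + δ) ^ ((1 : ℝ) + δ)) ^ μ := by
  rw [div_rpow (exp_nonneg _) (rpow_nonneg h1δ.le _), ← exp_mul, ← rpow_mul h1δ.le,
    rpow_def_of_pos h1δ, ← exp_add, ← exp_sub]
  ring_nf

lemma integrable_indicator_biInter {Ω ι : Type*} [MeasurableSpace Ω] {P : Measure Ω}
    [IsFiniteMeasure P] {A : ι → Set Ω} (hA : ∀ i, MeasurableSet (A i)) (I : Finset ι) :
    Integrable ((⋂ i ∈ I, A i).indicator (1 : Ω → ℝ)) P :=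
  (integrable_const 1).indicator (I.measurableSet_biInter fun i _ ↦ hA i)

variable {Ω ι : Type*} [Fintype ι]

noncomputable def eventCount (A : ι → Set Ω) (ω : Ω) : ℝ :=
  ∑ i, (A i).indicator 1 ω

lemma exp_mul_eventCount (A : ι → Set Ω) (t : ℝ) (ω : Ω) :
    exp (t * eventCount A ω)
      = ∑ I ∈ univ.powerset, (exp t - 1) ^ #I * (⋂ i ∈ I, A i).indicator 1 ω := by
  have h_single : ∀ i, exp (t * (A i).indicator 1 ω) = (exp t - 1) * (A i).indicator 1 ω + 1 := by
    intro i
    by_cases h : ω ∈ A i <;> simp [h]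
  simp_rw [eventCount, mul_sum, exp_sum, h_single, prod_add_one, prod_mul_distrib, prod_const,
    prod_indicator_const_apply, one_pow]

variable [MeasurableSpace Ω] {P : Measure Ω} [IsFiniteMeasure P] {A : ι → Set Ω}

lemma integrable_exp_mul_eventCount (hA : ∀ i, MeasurableSet (A i)) (t : ℝ) :
    Integrable (fun ω ↦ exp (t * eventCount A ω)) P := by
  simp_rw [exp_mul_eventCount]
  exact integrable_finsetSum _ fun I _ ↦ (integrable_indicator_biInter hA I).const_mul _

lemma mgf_eventCount_le (hA : ∀ i, MeasurableSet (A i))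
    (hneg : ∀ I : Finset ι, P (⋂ i ∈ I, A i) ≤ ∏ i ∈ I, P (A i)) {t : ℝ} (ht : 0 ≤ t) :
    mgf (eventCount A) P t ≤ exp ((exp t - 1) * ∑ i, P.real (A i)) := by
  set c := exp t - 1
  have hc : 0 ≤ c := sub_nonneg.mpr (one_le_exp ht)
  have hneg_real : ∀ I : Finset ι, P.real (⋂ i ∈ I, A i) ≤ ∏ i ∈ I, P.real (A i) := fun I ↦ by
    simp only [Measure.real, ← ENNReal.toReal_prod]
    exact ENNReal.toReal_mono (ENNReal.prod_ne_top fun i _ ↦ measure_ne_top P _) (hneg I)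
  calc mgf (eventCount A) P t
      = ∑ I ∈ univ.powerset, c ^ #I * P.real (⋂ i ∈ I, A i) := by
        simp only [mgf, exp_mul_eventCount]
        rw [integral_finsetSum _ fun I _ ↦ (integrable_indicator_biInter hA I).const_mul _]
        refine sum_congr rfl fun I _ ↦ ?_
        rw [integral_const_mul, integral_indicator_one (I.measurableSet_biInter fun i _ ↦ hA i)]
    _ ≤ ∑ I ∈ univ.powerset, c ^ #I * ∏ i ∈ I, P.real (A i) := by
        gcongr with I
        exact hneg_real I
    _ = ∏ i, (1 + c * P.real (A i)) := by
        simp_rw [prod_one_add, prod_mul_distrib, prod_const]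
    _ ≤ exp (∑ i, c * P.real (A i)) := prod_one_add_le_exp_sum _ fun i ↦ by positivity
    _ = exp (c * ∑ i, P.real (A i)) := by rw [mul_sum]

theorem measureReal_eventCount_ge_le_of_negCorrelated (hA : ∀ i, MeasurableSet (A i))
    (hneg : ∀ I : Finset ι, P (⋂ i ∈ I, A i) ≤ ∏ i ∈ I, P (A i)) {μ δ : ℝ} (hδ : 0 ≤ δ)
    (hE : ∑ i, P.real (A i) ≤ μ) :
    P.real {ω | (1 + δ) * μ ≤ eventCount A ω} ≤ (exp δ / (1 + δ) ^ ((1 : ℝ) + δ)) ^ μ := by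
  have h1δ : 0 < 1 + δ := by linarith
  have ht : 0 ≤ log (1 + δ) := log_nonneg (by linarith)
  have hmgf : mgf (eventCount A) P (log (1 + δ)) ≤ exp (δ * μ) := by
    calc mgf (eventCount A) P (log (1 + δ))
        ≤ exp ((exp (log (1 + δ)) - 1) * ∑ i, P.real (A i)) := mgf_eventCount_le hA hneg ht
      _ ≤ exp (δ * μ) := by
        rw [exp_log h1δ, add_sub_cancel_left]
        gcongr
  calc P.real {ω | (1 + δ) * μ ≤ eventCount A ω}
      ≤ exp (-log (1 + δ) * ((1 + δ) * μ)) * mgf (eventCount A) P (log (1 + δ)) :=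
        measure_ge_le_exp_mul_mgf _ ht (integrable_exp_mul_eventCount hA _)
    _ ≤ exp (-log (1 + δ) * ((1 + δ) * μ)) * exp (δ * μ) := by gcongr
    _ = (exp δ / (1 + δ) ^ ((1 : ℝ) + δ)) ^ μ := exp_neg_log_mul_mul_exp_eq_rpow h1δ μ

end EventCount

theorem stmt10_general {Ω : Type*} [Fintype Ω] [MeasurableSpace Ω] [MeasurableSingletonClass Ω]
    (P : Measure Ω) [IsProbabilityMeasure P] (n : ℕ) (X : Fin n → Ω → ℕ)
    (hX : ∀ (i : Fin n) (ω : Ω), X i ω ≤ 1)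
    (hneg : ∀ I : Finset (Fin n),
      P (⋂ i ∈ I, {ω | X i ω = 1}) ≤ ∏ i ∈ I, P {ω | X i ω = 1})
    (μ δ : ℝ) (hδ : 0 < δ)
    (hE : ∫ ω, (∑ i : Fin n, (X i ω : ℝ)) ∂P ≤ μ) :
    (P {ω | (1 + δ) * μ ≤ ∑ i : Fin n, (X i ω : ℝ)}).toReal
      ≤ (Real.exp δ / (1 + δ) ^ ((1 : ℝ) + δ)) ^ μ := by
  have hX_indicator : ∀ i ω, (X i ω : ℝ) = {ω | X i ω = 1}.indicator 1 ω := by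
    intro i ω
    rcases Nat.le_one_iff_eq_zero_or_eq_one.mp (hX i ω) with h | h <;> simp [h]
  have hmeas : ∀ i, MeasurableSet {ω | X i ω = 1} := fun i ↦ (Set.toFinite _).measurableSet
  have hsum : ∑ i, P.real {ω | X i ω = 1} = ∫ ω, ∑ i, (X i ω : ℝ) ∂P := by
    simp_rw [hX_indicator]
    rw [integral_finsetSum _ fun i _ ↦ (integrable_const 1).indicator (hmeas i)]
    simp only [integral_indicator_one (hmeas _)]
  have h := measureReal_eventCount_ge_le_of_negCorrelated hmeas hneg hδ.le (hsum ▸ hE)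
  simp_rw [eventCount, ← hX_indicator] at h
  exact h

/-- Chernoff upper-tail bound under negative correlation: if `X = Σ_{i=1}^n X_i` with
`{0,1}`-valued random variables satisfying `Pr[∀ i ∈ I, X_i = 1] ≤ ∏_{i ∈ I} Pr[X_i = 1]`
for all subsets `I`, and `E[X] ≤ μ`, then for any `δ > 0`,
`Pr[X ≥ (1+δ)μ] ≤ (e^δ / (1+δ)^{1+δ})^μ`. -/
theorem stmt10 {Ω : Type*} [Fintype Ω] [MeasurableSpace Ω] [MeasurableSingletonClass Ω]
    (P : Measure Ω) [IsProbabilityMeasure P] (n : ℕ) (X : Fin n → Ω → ℕ)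
    (hX : ∀ (i : Fin n) (ω : Ω), X i ω ≤ 1)
    (hneg : ∀ I : Finset (Fin n),
      P (⋂ i ∈ I, {ω | X i ω = 1}) ≤ ∏ i ∈ I, P {ω | X i ω = 1})
    (μ δ : ℝ) (hμ : 0 ≤ μ) (hδ : 0 < δ)
    (hE : ∫ ω, (∑ i : Fin n, (X i ω : ℝ)) ∂P ≤ μ) :
    (P {ω | (1 + δ) * μ ≤ ∑ i : Fin n, (X i ω : ℝ)}).toReal
      ≤ (Real.exp δ / (1 + δ) ^ ((1 : ℝ) + δ)) ^ μ :=
  stmt10_general P n X hX hneg μ δ hδ hE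
end

section
/- If each of n nodes sends at most one message during a protocol execution and X_i is the indicator that node i sends, then the total number of messages X = Σ X_i satisfies E[X] = Σ_{i=1}^n Pr[X_i = 1] (linearity of expectation for indicator sums), and combining with the per-node bound of Lemma 3 yields E[X] ≤ 2·log₂ N + 1. -/
/-!
Each `X i` is a `{0,1}`-valued variable, so its expectation is `Pr[X i = 1]`, and linearity of
expectation gives the first claim. For the bound, sum the per-node bounds over the `n ≤ N` nodes:
the terms `1/N` contribute at most `1`, and for each `r` the geometric series in `i` with ratio
`1 - a`, `a = 2^(r-1)/N`, sums to at most `1/a`, so its coefficient `2^r/N = 2a` leaves at most `2`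
per level `r`, i.e. `2 log₂ N` in total.
-/

open MeasureTheory Finset

theorem integral_natCast_eq_measureReal_of_le_one {Ω : Type*} [MeasurableSpace Ω]
    {P : Measure Ω} {f : Ω → ℕ} (hfm : Measurable f) (hf : ∀ ω, f ω ≤ 1) :
    ∫ ω, (f ω : ℝ) ∂P = P.real {ω | f ω = 1} := by
  have hf_eq : (fun ω ↦ (f ω : ℝ)) = Set.indicator {ω | f ω = 1} 1 := by
    ext ω
    rcases Nat.le_one_iff_eq_zero_or_eq_one.mp (hf ω) with h | h <;> simp [h]
  rw [hf_eq]
  exact integral_indicator_one (hfm (measurableSet_singleton 1))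

theorem mul_sum_range_one_sub_pow_succ_le_one {a : ℝ} (ha₀ : 0 ≤ a) (ha₁ : a ≤ 1) (n : ℕ) :
    a * ∑ i ∈ range n, (1 - a) ^ (i + 1) ≤ 1 := by
  have hgeom : a * ∑ i ∈ range n, (1 - a) ^ i = 1 - (1 - a) ^ n := by
    simpa using mul_neg_geom_sum (1 - a) n
  have hpow : 0 ≤ (1 - a) ^ n := pow_nonneg (by linarith) n
  calc a * ∑ i ∈ range n, (1 - a) ^ (i + 1)
      = (1 - a) * (a * ∑ i ∈ range n, (1 - a) ^ i) := by
        simp only [pow_succ, ← sum_mul]; ring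
    _ = (1 - a) * (1 - (1 - a) ^ n) := by rw [hgeom]
    _ ≤ 1 := by nlinarith

theorem sum_range_two_pow_div_mul_le_two {N : ℝ} {r : ℕ} (hr : 1 ≤ r) (hN : 2 ^ (r - 1) ≤ N)
    (n : ℕ) : ∑ i ∈ range n, 2 ^ r / N * (1 - 2 ^ (r - 1) / N) ^ (i + 1) ≤ 2 := by
  have hN₀ : 0 ≤ N := le_trans (by positivity) hN
  set a : ℝ := 2 ^ (r - 1) / N
  have ha₀ : 0 ≤ a := div_nonneg (by positivity) hN₀
  have ha₁ : a ≤ 1 := div_le_one_of_le₀ hN hN₀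
  have hcoeff : (2 : ℝ) ^ r / N = 2 * a := by
    rw [← Nat.sub_add_cancel hr, pow_succ]; ring
  rw [← mul_sum, hcoeff, mul_assoc]
  linarith [mul_sum_range_one_sub_pow_succ_le_one ha₀ ha₁ n]

/-- The per-node bound of Lemma 3 on `Pr[X_i = 1]`, with exponent `k = i + 1` for node `i`. -/
noncomputable def sendProbBound (N k : ℕ) : ℝ :=
  1 / (N : ℝ) + ∑ r ∈ Icc 1 (Nat.log 2 N), (2 : ℝ) ^ r / N * (1 - (2 : ℝ) ^ (r - 1) / N) ^ k

theorem sum_sendProbBound_le {N n : ℕ} (hn : n ≤ N) :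
    ∑ i ∈ range n, sendProbBound N (i + 1) ≤ 2 * (Nat.log 2 N : ℝ) + 1 := by
  have hnodes : (n : ℝ) * (1 / N) ≤ 1 := by
    rw [mul_one_div]
    exact div_le_one_of_le₀ (by exact_mod_cast hn) (Nat.cast_nonneg N)
  have hlevels : ∑ r ∈ Icc 1 (Nat.log 2 N), ∑ i ∈ range n,
      (2 : ℝ) ^ r / N * (1 - (2 : ℝ) ^ (r - 1) / N) ^ (i + 1) ≤ 2 * Nat.log 2 N := by
    calc _ ≤ ∑ _r ∈ Icc 1 (Nat.log 2 N), (2 : ℝ) := by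
          refine sum_le_sum fun r hr ↦ ?_
          obtain ⟨hr₁, hrlog⟩ := mem_Icc.mp hr
          have hN : N ≠ 0 := by rintro rfl; simp at hrlog; omega
          refine sum_range_two_pow_div_mul_le_two hr₁ ?_ n
          exact_mod_cast Nat.pow_le_of_le_log hN (by omega)
      _ = 2 * Nat.log 2 N := by simp [mul_comm]
  unfold sendProbBound
  rw [sum_add_distrib, sum_const, card_range, nsmul_eq_mul, sum_comm]
  linarith

theorem stmt14_general {Ω : Type*} [Fintype Ω] [MeasurableSpace Ω] [MeasurableSingletonClass Ω]
    (P : Measure Ω) [IsProbabilityMeasure P] (N n : ℕ) (hn : n ≤ N)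
    (X : Fin n → Ω → ℕ) (hX : ∀ (i : Fin n) (ω : Ω), X i ω ≤ 1)
    (hbound : ∀ i : Fin n, (P {ω | X i ω = 1}).toReal
      ≤ 1 / (N : ℝ) + ∑ r ∈ Finset.Icc 1 (Nat.log 2 N),
          (2 : ℝ) ^ r / (N : ℝ) * (1 - (2 : ℝ) ^ (r - 1) / (N : ℝ)) ^ ((i : ℕ) + 1)) :
    (∫ ω, (∑ i : Fin n, (X i ω : ℝ)) ∂P = ∑ i : Fin n, (P {ω | X i ω = 1}).toReal) ∧
    ∫ ω, (∑ i : Fin n, (X i ω : ℝ)) ∂P ≤ 2 * (Nat.log 2 N : ℝ) + 1 := by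
  have hlinear : ∫ ω, (∑ i : Fin n, (X i ω : ℝ)) ∂P = ∑ i : Fin n, (P {ω | X i ω = 1}).toReal := by
    rw [integral_finsetSum _ fun i _ ↦ Integrable.of_finite]
    exact sum_congr rfl fun i _ ↦
      integral_natCast_eq_measureReal_of_le_one (measurable_of_finite _) (hX i)
  refine ⟨hlinear, ?_⟩
  calc _ = ∑ i : Fin n, (P {ω | X i ω = 1}).toReal := hlinear
    _ ≤ ∑ i : Fin n, sendProbBound N (i + 1) := sum_le_sum fun i _ ↦ hbound i
    _ = ∑ i ∈ range n, sendProbBound N (i + 1) := Fin.sum_univ_eq_sum_range (fun i ↦ sendProbBound N (i + 1)) n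
    _ ≤ 2 * (Nat.log 2 N : ℝ) + 1 := sum_sendProbBound_le hn

/-- If each node sends at most one message and `X i` is the indicator that node `i` (holding the
`(i+1)`-st largest value) sends, then `E[Σ X_i] = Σ Pr[X_i = 1]` (linearity of expectation), and
combining with the per-node bound `Pr[X_i = 1] ≤ 1/N + Σ_{r=1}^{log₂ N} (2^r/N)(1-2^{r-1}/N)^{i+1}`
yields `E[X] ≤ 2·log₂ N + 1`. -/
theorem stmt14 {Ω : Type*} [Fintype Ω] [MeasurableSpace Ω] [MeasurableSingletonClass Ω]
    (P : Measure Ω) [IsProbabilityMeasure P] (N n : ℕ) (hpow : ∃ m : ℕ, N = 2 ^ m) (hn : n ≤ N)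
    (X : Fin n → Ω → ℕ) (hX : ∀ (i : Fin n) (ω : Ω), X i ω ≤ 1)
    (hbound : ∀ i : Fin n, (P {ω | X i ω = 1}).toReal
      ≤ 1 / (N : ℝ) + ∑ r ∈ Finset.Icc 1 (Nat.log 2 N),
          (2 : ℝ) ^ r / (N : ℝ) * (1 - (2 : ℝ) ^ (r - 1) / (N : ℝ)) ^ ((i : ℕ) + 1)) :
    (∫ ω, (∑ i : Fin n, (X i ω : ℝ)) ∂P = ∑ i : Fin n, (P {ω | X i ω = 1}).toReal) ∧
    ∫ ω, (∑ i : Fin n, (X i ω : ℝ)) ∂P ≤ 2 * (Nat.log 2 N : ℝ) + 1 :=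
  stmt14_general P N n hn X hX hbound
end
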